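/- Let n ≥ k+1 with k ≥ 1, consider the k-nearest neighbor platoon P(n,k), and let S ⊆ {1,…,n} be a nonempty set of reference vehicles with F = {1,…,n} \ S nonempty; let L_g be the grounded Laplacian. Then: (i) (sufficiency) if 0 ≤ τ < π/(8k), then for every eigenvalue λ of L_g, every root s ∈ ℂ of s + λ·e^{−τs} = 0 satisfies Re s < 0; and (ii) (necessity) if τ > π/(2k), then there exist an eigenvalue λ of L_g and a root s ∈ ℂ of s + λ·e^{−τs} = 0 with Re s ≥ 0. In particular k ≤ λ_{|F|}(L_g) ≤ 4k. -/

import Mathlib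

/-!
If `s` with `Re s ≥ 0` solves `s + λ e^{-τ s} = 0`, then `|s| ≤ λ`; so for `τλ < π/2` the angle
`τ Im s` lies in `(-π/2, π/2)` and `Re s = -λ e^{-τ Re s} cos (τ Im s) < 0`, a contradiction.
For `τλ > π/2`, after substituting `w = τ s`, a root with `Re w ≥ 0` is found by the
intermediate value theorem.

The grounded Laplacian of a connected graph with `S ≠ ∅` is positive definite: a vector in its
kernel extends by zero to a vector in the kernel of the Laplacian, which is constant.
In `P(n,k)` every degree lies in `[k, 2k]`; Gershgorin's theorem bounds the eigenvalues by `4k`,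
and the trace, a sum of degrees, forces an eigenvalue `≥ k`.
-/

open scoped Matrix

/-- The `k`-nearest neighbor platoon `P(n,k)`: the graph on `{1,…,n}` (modeled as `Fin n`)
in which distinct vertices `i, j` are adjacent iff `|i − j| ≤ k`. -/
def platoon (n k : ℕ) : SimpleGraph (Fin n) where
  Adj i j := i ≠ j ∧ ((i : ℤ) - (j : ℤ)).natAbs ≤ k
  symm := by
    constructor
    intro i j h
    exact ⟨h.1.symm, by omega⟩
  loopless := ⟨fun i h => h.1 rfl⟩

instance (n k : ℕ) : DecidableRel (platoon n k).Adj :=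
  fun i j => inferInstanceAs (Decidable (i ≠ j ∧ ((i : ℤ) - (j : ℤ)).natAbs ≤ k))

/-- The grounded Laplacian: the principal submatrix of the Laplacian of `G`
obtained by deleting the rows and columns indexed by the grounded set `S`. -/
noncomputable def groundedLaplacian {V : Type*} [Fintype V] [DecidableEq V]
    (G : SimpleGraph V) [DecidableRel G.Adj] (S : Finset V) :
    Matrix {v : V // v ∉ S} {v : V // v ∉ S} ℝ :=
  (G.lapMatrix ℝ).submatrix (fun i => (i : V)) (fun j => (j : V))

open Complex in
lemma re_neg_of_add_mul_exp_neg_mul_eq_zero {τ l : ℝ} (hτ : 0 ≤ τ) (hl : 0 < l)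
    (hτl : τ * l < Real.pi / 2) {s : ℂ} (hs : s + l * exp (-τ * s) = 0) : s.re < 0 := by
  by_contra! hre
  have hs' : s = -(l * exp (-τ * s)) := eq_neg_of_add_eq_zero_left hs
  have hnorm : ‖s‖ ≤ l := by
    rw [hs', norm_neg, norm_mul, Complex.norm_real, Real.norm_of_nonneg hl.le, Complex.norm_exp]
    have : (-(τ : ℂ) * s).re ≤ 0 := by simpa using mul_nonneg hτ hre
    exact mul_le_of_le_one_right hl.le (Real.exp_le_one_iff.mpr this)
  have hcos : 0 < Real.cos (τ * s.im) := by
    have : |τ * s.im| < Real.pi / 2 := by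
      rw [abs_mul, abs_of_nonneg hτ]
      calc τ * |s.im| ≤ τ * l := by gcongr; exact (abs_im_le_norm s).trans hnorm
        _ < _ := hτl
    exact Real.cos_pos_of_mem_Ioo ⟨by linarith [neg_abs_le (τ * s.im)],
      (le_abs_self _).trans_lt this⟩
  have hre' : s.re = -(l * (Real.exp (-(τ * s.re)) * Real.cos (τ * s.im))) := by
    conv_lhs => rw [hs']
    simp [Complex.exp_re]
  have : 0 < l * (Real.exp (-(τ * s.re)) * Real.cos (τ * s.im)) := by positivity
  linarith

open Real in
lemma exists_add_mul_exp_neg_eq_zero_re_nonneg {a : ℝ} (ha : π / 2 < a) :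
    ∃ w : ℂ, w + a * Complex.exp (-w) = 0 ∧ 0 ≤ w.re := by
  have ha0 : 0 < a := by linarith [pi_pos]
  -- Real part: `cos (θ x) = -x eˣ / a`; imaginary part: a zero of `F`. Past `x eˣ = a`, `arccos`
  -- is stuck at `π`, so `F = -π` there and the zero found by IVT lies in the admissible range.
  set θ : ℝ → ℝ := fun x => arccos (-(x * exp x) / a) with hθ
  set F : ℝ → ℝ := fun x => a * exp (-x) * sin (θ x) - θ x with hF
  have hFcont : ContinuousOn F (Set.Icc 0 a) := by
    have : Continuous θ := continuous_arccos.comp (by fun_prop)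
    exact (by fun_prop : Continuous F).continuousOn
  have hθ_eq_pi {x : ℝ} (hx : -(x * exp x) / a < -1) : θ x = π := arccos_of_le_neg_one hx.le
  have hF0 : 0 ≤ F 0 := by
    simp only [hF, hθ, neg_zero, exp_zero, mul_one, zero_div, arccos_zero, sin_pi_div_two,
      sub_nonneg]
    linarith
  have hFa : F a ≤ 0 := by
    have : -(a * exp a) / a < -1 := by
      rw [neg_div, mul_div_cancel_left₀ _ ha0.ne', neg_lt_neg_iff]; exact one_lt_exp_iff.mpr ha0
    simp [hF, hθ_eq_pi this, pi_pos.le]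
  obtain ⟨x, hx, hFx⟩ := intermediate_value_Icc' ha0.le hFcont ⟨hFa, hF0⟩
  have hc : -1 ≤ -(x * exp x) / a := by
    by_contra! h
    simp [hF, hθ_eq_pi h, pi_ne_zero] at hFx
  have hcos : cos (θ x) = -(x * exp x) / a := by
    refine cos_arccos hc ?_
    have : 0 ≤ x * exp x / a := div_nonneg (mul_nonneg hx.1 (exp_pos x).le) ha0.le
    rw [neg_div]
    linarith
  refine ⟨⟨x, θ x⟩, ?_, hx.1⟩
  apply Complex.ext
  · simp only [Complex.add_re, Complex.mul_re, Complex.ofReal_re, Complex.exp_re, Complex.neg_re,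
      exp_neg, Complex.neg_im, cos_neg, hcos, Complex.ofReal_im, zero_mul, sub_zero,
      Complex.zero_re]
    field_simp
    ring
  · simp only [Complex.add_im, Complex.mul_im, Complex.ofReal_re, Complex.exp_im, Complex.neg_re,
      Complex.neg_im, sin_neg, mul_neg, Complex.ofReal_im, zero_mul, add_zero, Complex.zero_im]
    simp only [hF] at hFx
    linarith

lemma exists_add_mul_exp_neg_mul_eq_zero_re_nonneg {τ l : ℝ} (hτ : 0 < τ)
    (hτl : Real.pi / 2 < τ * l) :
    ∃ s : ℂ, s + l * Complex.exp (-τ * s) = 0 ∧ 0 ≤ s.re := by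
  obtain ⟨w, hw, hre⟩ := exists_add_mul_exp_neg_eq_zero_re_nonneg hτl
  refine ⟨w / τ, ?_, by simpa using div_nonneg hre hτ.le⟩
  have hτ' : (τ : ℂ) ≠ 0 := by exact_mod_cast hτ.ne'
  rw [neg_mul, mul_div_cancel₀ w hτ']
  push_cast at hw
  field_simp
  linear_combination hw

open scoped ComplexOrder in
lemma Matrix.PosDef.pos_of_mem_spectrum {n 𝕜 : Type*} [Fintype n] [DecidableEq n] [RCLike 𝕜]
    {A : Matrix n n 𝕜} (hA : A.PosDef) {l : ℝ} (hl : l ∈ spectrum ℝ A) : 0 < l := by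
  rw [hA.isHermitian.spectrum_real_eq_range_eigenvalues] at hl
  obtain ⟨i, rfl⟩ := hl
  exact hA.eigenvalues_pos i

lemma Matrix.IsHermitian.exists_mem_spectrum_ge_of_le_diag {n 𝕜 : Type*} [Fintype n]
    [DecidableEq n] [Nonempty n] [RCLike 𝕜] {A : Matrix n n 𝕜} (hA : A.IsHermitian) {c : ℝ}
    (hc : ∀ i, c ≤ RCLike.re (A i i)) : ∃ l ∈ spectrum ℝ A, c ≤ l := by
  by_contra! h
  have htrace : RCLike.re A.trace = ∑ i, hA.eigenvalues i := by
    simp [hA.trace_eq_sum_eigenvalues]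
  have : ∑ i, hA.eigenvalues i < ∑ i, RCLike.re (A i i) :=
    Finset.sum_lt_sum_of_nonempty Finset.univ_nonempty fun i _ =>
      (h _ (hA.eigenvalues_mem_spectrum_real i)).trans_le (hc i)
  simp [Matrix.trace, htrace.symm] at this

section GroundedLaplacian

variable {V : Type*} [Fintype V] [DecidableEq V] (G : SimpleGraph V) [DecidableRel G.Adj]
  {S : Finset V}

lemma groundedLaplacian_apply_self (i : {v // v ∉ S}) :
    groundedLaplacian G S i i = G.degree i := by
  simp [groundedLaplacian, SimpleGraph.lapMatrix, SimpleGraph.degMatrix]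

lemma norm_groundedLaplacian_apply_of_ne {i j : {v // v ∉ S}} (hij : i ≠ j) :
    ‖groundedLaplacian G S i j‖ = if G.Adj i j then 1 else 0 := by
  have : (i : V) ≠ j := Subtype.coe_injective.ne hij
  by_cases h : G.Adj i j <;>
    simp [groundedLaplacian, SimpleGraph.lapMatrix, SimpleGraph.degMatrix, this, h]

lemma groundedLaplacian_posSemidef : (groundedLaplacian G S).PosSemidef :=
  (SimpleGraph.posSemidef_lapMatrix ℝ G).submatrix _

variable (S) in
def extendByZero (x : {v // v ∉ S} → ℝ) (v : V) : ℝ :=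
  if h : v ∈ S then 0 else x ⟨v, h⟩

lemma extendByZero_dotProduct (x : {v // v ∉ S} → ℝ) (y : V → ℝ) :
    extendByZero S x ⬝ᵥ y = x ⬝ᵥ fun i => y i := by
  simp only [dotProduct, extendByZero]
  rw [← Fintype.sum_subtype_add_sum_subtype (· ∈ S),
    Finset.sum_eq_zero fun i _ => by rw [dif_pos i.2, zero_mul], zero_add]
  exact Finset.sum_congr rfl fun i _ => by rw [dif_neg i.2]

lemma groundedLaplacian_mulVec (x : {v // v ∉ S} → ℝ) :
    groundedLaplacian G S *ᵥ x =
      fun i : {v // v ∉ S} => (G.lapMatrix ℝ *ᵥ extendByZero S x) i := by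
  ext i
  simp only [Matrix.mulVec, dotProduct_comm _ (extendByZero S x), extendByZero_dotProduct]
  exact dotProduct_comm _ _

lemma dotProduct_groundedLaplacian_mulVec (x : {v // v ∉ S} → ℝ) :
    x ⬝ᵥ (groundedLaplacian G S *ᵥ x) =
      extendByZero S x ⬝ᵥ (G.lapMatrix ℝ *ᵥ extendByZero S x) := by
  rw [extendByZero_dotProduct, groundedLaplacian_mulVec]

lemma groundedLaplacian_posDef (hG : G.Preconnected) (hS : S.Nonempty) :
    (groundedLaplacian G S).PosDef := by
  refine .of_dotProduct_mulVec_pos (groundedLaplacian_posSemidef G).isHermitian fun x hx => ?_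
  rw [star_trivial]
  refine ((groundedLaplacian_posSemidef G).dotProduct_mulVec_nonneg x).lt_of_ne' fun h => hx ?_
  rw [star_trivial, dotProduct_groundedLaplacian_mulVec, ← Matrix.toLinearMap₂'_apply',
    SimpleGraph.lapMatrix_toLinearMap₂'_apply'_eq_zero_iff_forall_reachable] at h
  obtain ⟨s, hs⟩ := hS
  ext i
  simpa [extendByZero, i.2, hs] using h i s (hG i s)

lemma sum_norm_groundedLaplacian_offDiag_le (i : {v // v ∉ S}) :
    ∑ j ∈ Finset.univ.erase i, ‖groundedLaplacian G S i j‖ ≤ G.degree i := by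
  have hnonneg (v w : V) : (0 : ℝ) ≤ if G.Adj v w then 1 else 0 := ite_nonneg zero_le_one le_rfl
  calc ∑ j ∈ Finset.univ.erase i, ‖groundedLaplacian G S i j‖
      = ∑ j ∈ Finset.univ.erase i, if G.Adj i j then (1 : ℝ) else 0 :=
        Finset.sum_congr rfl fun j hj =>
          norm_groundedLaplacian_apply_of_ne G (Finset.ne_of_mem_erase hj).symm
    _ ≤ ∑ j : {v // v ∉ S}, if G.Adj i j then (1 : ℝ) else 0 :=
        Finset.sum_le_univ_sum_of_nonneg fun j => hnonneg _ _
    _ ≤ ∑ v, if G.Adj i v then (1 : ℝ) else 0 := by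
        rw [← Fintype.sum_subtype_add_sum_subtype (· ∉ S)]
        exact le_add_of_nonneg_right (Finset.sum_nonneg fun j _ => hnonneg _ _)
    _ = G.degree i := (G.degree_eq_sum_if_adj _).symm

lemma le_two_mul_of_mem_spectrum_groundedLaplacian {d : ℕ} (hd : ∀ v, G.degree v ≤ d) {l : ℝ}
    (hl : l ∈ spectrum ℝ (groundedLaplacian G S)) : l ≤ 2 * d := by
  rw [← Matrix.spectrum_toLin', ← Module.End.hasEigenvalue_iff_mem_spectrum] at hl
  obtain ⟨i, hi⟩ := eigenvalue_mem_ball hl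
  rw [Metric.mem_closedBall, Real.dist_eq, groundedLaplacian_apply_self] at hi
  have hdi : (G.degree i : ℝ) ≤ d := by exact_mod_cast hd i
  linarith [(abs_le.mp hi).2, sum_norm_groundedLaplacian_offDiag_le G i]

lemma exists_mem_spectrum_groundedLaplacian_ge {d : ℕ} (hd : ∀ v, d ≤ G.degree v)
    (hS : Sᶜ.Nonempty) : ∃ l ∈ spectrum ℝ (groundedLaplacian G S), d ≤ l := by
  obtain ⟨v, hv⟩ := hS
  have : Nonempty {v // v ∉ S} := ⟨⟨v, Finset.mem_compl.mp hv⟩⟩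
  refine (groundedLaplacian_posSemidef G).isHermitian.exists_mem_spectrum_ge_of_le_diag
    fun i => ?_
  simpa [groundedLaplacian_apply_self] using hd i

end GroundedLaplacian

section Platoon

variable {n k : ℕ}

@[simp]
lemma platoon_adj {i j : Fin n} :
    (platoon n k).Adj i j ↔ i ≠ j ∧ ((i : ℤ) - (j : ℤ)).natAbs ≤ k := Iff.rfl

lemma platoon_preconnected (hk : 1 ≤ k) : (platoon n k).Preconnected :=
  (SimpleGraph.pathGraph_preconnected n).mono fun i j h => by
    rw [SimpleGraph.pathGraph_adj] at h
    exact ⟨fun e => by subst e; omega, by omega⟩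

lemma platoon_degree_le (i : Fin n) : (platoon n k).degree i ≤ 2 * k := by
  rw [← SimpleGraph.card_neighborFinset_eq_degree]
  calc _ ≤ ((Finset.Icc (-k : ℤ) k).erase 0).card := by
        refine Finset.card_le_card_of_injOn (fun v => (v : ℤ) - i) (fun v hv => ?_)
          fun a _ b _ h => Fin.ext (by simp only at h; omega)
        rw [Finset.mem_coe, SimpleGraph.mem_neighborFinset, platoon_adj, ne_eq, Fin.ext_iff] at hv
        rw [Finset.mem_coe, Finset.mem_erase, Finset.mem_Icc]
        dsimp only
        omega
    _ = 2 * k := by rw [Finset.card_erase_of_mem (by simp), Int.card_Icc]; omega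

lemma le_platoon_degree (hn : k + 1 ≤ n) (i : Fin n) : k ≤ (platoon n k).degree i := by
  rw [← SimpleGraph.card_neighborFinset_eq_degree]
  -- the window `[i - k, min (n - 1) (i + k)]` has at least `k + 1` points
  let a : Fin n := ⟨i - k, by omega⟩
  let b : Fin n := ⟨min (n - 1) (i + k), by omega⟩
  have hi : i ∈ Finset.Icc a b := by simp only [Finset.mem_Icc, Fin.le_def, a, b]; omega
  calc k ≤ ((Finset.Icc a b).erase i).card := by
        rw [Finset.card_erase_of_mem hi, Fin.card_Icc]; simp only [a, b]; omega
    _ ≤ _ := Finset.card_le_card fun v hv => by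
        simp only [Finset.mem_erase, Finset.mem_Icc, Fin.le_def, a, b] at hv
        simp only [SimpleGraph.mem_neighborFinset, platoon_adj, ne_eq, Fin.ext_iff]
        omega

end Platoon

/-- for the platoon `P(n,k)` with grounded Laplacian `L_g`:
(i) if `0 ≤ τ < π/(8k)` then for each eigenvalue `λ` of `L_g`, every root `s` of
`s + λ·e^{−τs} = 0` has `Re s < 0` (delayed velocity tracking is asymptotically stable);
(ii) if `τ > π/(2k)` then some eigenvalue `λ` of `L_g` admits a root `s` of
`s + λ·e^{−τs} = 0` with `Re s ≥ 0` (instability).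
In particular `k ≤ λ_{|F|}(L_g) ≤ 4k`. -/
theorem platoon_delay_stability (n k : ℕ) (hk : 1 ≤ k) (hn : k + 1 ≤ n)
    (S : Finset (Fin n)) (hS : S.Nonempty) (hF : Sᶜ.Nonempty) :
    (∀ τ : ℝ, 0 ≤ τ → τ < Real.pi / (8 * k) →
      ∀ l ∈ spectrum ℝ (groundedLaplacian (platoon n k) S),
        ∀ s : ℂ, s + (l : ℂ) * Complex.exp (-(τ : ℂ) * s) = 0 → s.re < 0) ∧
    (∀ τ : ℝ, Real.pi / (2 * k) < τ →
      ∃ l ∈ spectrum ℝ (groundedLaplacian (platoon n k) S),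
        ∃ s : ℂ, s + (l : ℂ) * Complex.exp (-(τ : ℂ) * s) = 0 ∧ 0 ≤ s.re) ∧
    ((∀ l ∈ spectrum ℝ (groundedLaplacian (platoon n k) S), l ≤ 4 * k) ∧
      (∃ l ∈ spectrum ℝ (groundedLaplacian (platoon n k) S), (k : ℝ) ≤ l)) := by
  have hpos : ∀ l ∈ spectrum ℝ (groundedLaplacian (platoon n k) S), 0 < l := fun l hl =>
    (groundedLaplacian_posDef _ (platoon_preconnected hk) hS).pos_of_mem_spectrum hl
  have hle : ∀ l ∈ spectrum ℝ (groundedLaplacian (platoon n k) S), l ≤ 4 * k := by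
    intro l hl
    have := le_two_mul_of_mem_spectrum_groundedLaplacian _ platoon_degree_le hl
    push_cast at this
    linarith
  obtain ⟨lmax, hlmax, hk_le⟩ :=
    exists_mem_spectrum_groundedLaplacian_ge _ (le_platoon_degree hn) hF
  refine ⟨fun τ hτ0 hτ l hl s hs => ?_, fun τ hτ => ⟨lmax, hlmax, ?_⟩, hle, lmax, hlmax, hk_le⟩
  · refine re_neg_of_add_mul_exp_neg_mul_eq_zero hτ0 (hpos l hl) ?_ hs
    calc τ * l ≤ τ * (4 * k) := mul_le_mul_of_nonneg_left (hle l hl) hτ0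
      _ < Real.pi / (8 * k) * (4 * k) := by gcongr
      _ = Real.pi / 2 := by field_simp; ring
  · have hτ0 : 0 < τ := (by positivity : 0 < Real.pi / (2 * k)).trans hτ
    refine exists_add_mul_exp_neg_mul_eq_zero_re_nonneg hτ0 ?_
    calc Real.pi / 2 = Real.pi / (2 * k) * k := by field_simp
      _ < τ * k := by gcongr
      _ ≤ τ * lmax := mul_le_mul_of_nonneg_left hk_le hτ0.le
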